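/- arXiv:2406.01041 — 2 statements merged into one kernel-verified Lean document; each statement's English description precedes it below -/
import Mathlib

section
/- If the dual solution set dsol(A,B) = {y} is a singleton, then the primal solution set psol(A,B) equals A^{−1}y ∩ B^{−1}(−y). -/
open Pointwise InnerProductSpace

variable {X : Type*} [NormedAddCommGroup X] [InnerProductSpace ℝ X]

/-- A set-valued operator `A : X ⇉ X` is monotone. -/
def SVMonotone (A : X → Set X) : Prop :=
  ∀ ⦃x y u v : X⦄, u ∈ A x → v ∈ A y → 0 ≤ ⟪x - y, u - v⟫_ℝ

/-- A set-valued operator is maximally monotone. -/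
def SVMaxMonotone (A : X → Set X) : Prop :=
  SVMonotone A ∧ ∀ x u : X, (∀ y v, v ∈ A y → 0 ≤ ⟪x - y, u - v⟫_ℝ) → u ∈ A x

/-- Set-valued inverse. -/
def SVInv (A : X → Set X) : X → Set X := fun u => {x | u ∈ A x}

/-- `B^∨ = (−Id) ∘ B ∘ (−Id)`. -/
def SVVee (B : X → Set X) : X → Set X := fun x => -(B (-x))

/-- `B^{−∨} = (B⁻¹)^∨`. -/
def SVInvVee (B : X → Set X) : X → Set X := SVVee (SVInv B)

/-- Primal Attouch–Théra solutions: `zer (A + B)`. -/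
def psol (A B : X → Set X) : Set X := {x | (0 : X) ∈ A x + B x}

/-- Dual Attouch–Théra solutions: `zer (A⁻¹ + B^{−∨})`. -/
def dsol (A B : X → Set X) : Set X := {y | (0 : X) ∈ SVInv A y + SVInvVee B y}

omit [InnerProductSpace ℝ X] in
theorem mem_psol_iff {A B : X → Set X} {x : X} :
    x ∈ psol A B ↔ ∃ u ∈ A x, -u ∈ B x := by
  constructor
  · rintro ⟨u, hu, v, hv, huv⟩
    exact ⟨u, hu, eq_neg_of_add_eq_zero_right huv ▸ hv⟩
  · rintro ⟨u, hu, hv⟩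
    exact ⟨u, hu, -u, hv, add_neg_cancel u⟩

omit [InnerProductSpace ℝ X] in
theorem mem_dsol_iff {A B : X → Set X} {y : X} :
    y ∈ dsol A B ↔ (SVInv A y ∩ SVInv B (-y)).Nonempty := by
  have mem_invVee : ∀ x, -x ∈ SVInvVee B y ↔ x ∈ SVInv B (-y) := fun x => by
    simp only [SVInvVee, SVVee, Set.mem_neg, neg_neg]
  constructor
  · rintro ⟨x, hx, z, hz, hxz⟩
    rw [eq_neg_of_add_eq_zero_right hxz, mem_invVee] at hz
    exact ⟨x, hx, hz⟩
  · rintro ⟨x, hx, hx'⟩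
    exact ⟨x, hx, -x, (mem_invVee x).2 hx', add_neg_cancel x⟩

omit [InnerProductSpace ℝ X] in
/-- A witness `u ∈ A x` with `-u ∈ B x` for `x ∈ psol A B` is itself a dual solution. -/
theorem psol_eq_biUnion_dsol (A B : X → Set X) :
    psol A B = ⋃ y ∈ dsol A B, SVInv A y ∩ SVInv B (-y) := by
  ext x
  simp only [Set.mem_iUnion, exists_prop, mem_psol_iff, mem_dsol_iff]
  constructor
  · rintro ⟨u, hu⟩
    exact ⟨u, ⟨x, hu⟩, hu⟩
  · rintro ⟨u, -, hu⟩
    exact ⟨u, hu⟩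

theorem psol_eq_of_dsol_singleton_general (A B : X → Set X) (y : X)
    (hy : dsol A B = {y}) :
    psol A B = SVInv A y ∩ SVInv B (-y) := by
  rw [psol_eq_biUnion_dsol, hy, Set.biUnion_singleton]

/-- If `dsol (A, B) = {y}` then `psol (A, B) = A⁻¹ y ∩ B⁻¹ (−y)`. -/
theorem psol_eq_of_dsol_singleton (A B : X → Set X)
    (hA : SVMaxMonotone A) (hB : SVMaxMonotone B) (y : X)
    (hy : dsol A B = {y}) :
    psol A B = SVInv A y ∩ SVInv B (-y) :=
  psol_eq_of_dsol_singleton_general A B y hy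
end

section
/- The i-th coordinate projection restricted to the set of cycles, Q_i|_Z : Z → F_i, is a bijection, and Q_i(Z) = F_i. -/
open Pointwise InnerProductSpace

variable {X : Type*} [NormedAddCommGroup X] [InnerProductSpace ℝ X]
variable {m : ℕ} [NeZero m]

/-- `J` is the (single-valued, full-domain) resolvent `(Id + A)⁻¹` of `A`. -/
def IsResolventOf (J : X → X) (A : X → Set X) : Prop :=
  ∀ x y : X, J y = x ↔ y - x ∈ A x

/-- The cyclic composition `J_i ∘ J_{i-1} ∘ ⋯ ∘ J_1 ∘ J_m ∘ ⋯ ∘ J_{i+1}`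
(indices understood cyclically in `Fin m`, `0`-based). -/
def cyclicComp (J : Fin m → X → X) (i : Fin m) : X → X :=
  fun x => (List.range m).foldl (fun y k => J (i + 1 + Fin.ofNat m k) y) x

/-- `F i` : the fixed point set of the cyclic composition ending with `J i`. -/
def cycFix (J : Fin m → X → X) (i : Fin m) : Set X :=
  {x | cyclicComp J i x = x}

/-- `(z_1, …, z_m)` is a cycle: `z_{i} = J_i z_{i-1}` cyclically. -/
def IsCycle (J : Fin m → X → X) (z : Fin m → X) : Prop :=
  ∀ i : Fin m, z i = J i (z (i - 1))

/-- The circular right-shift operator on `X^m`. -/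
def shiftR (z : Fin m → X) : Fin m → X := fun i => z (i - 1)

/-- The coordinatewise resolvent `J_A` on `X^m`. -/
def resProd (J : Fin m → X → X) (z : Fin m → X) : Fin m → X := fun i => J i (z i)

/-- The product operator `A = A_1 × ⋯ × A_m` on `X^m`. -/
def prodOp (A : Fin m → X → Set X) : (Fin m → X) → Set (Fin m → X) :=
  fun z => {u | ∀ i, u i ∈ A i (z i)}

/-- The set of cycles `Z = Fix (J_A ∘ R)`. -/
def cycleSet (J : Fin m → X → X) : Set (Fin m → X) :=
  {z | resProd J (shiftR z) = z}

/-!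
A cycle is determined by any one of its coordinates: starting from `z i` and applying
`J (i + 1), J (i + 2), …` in turn reproduces `z (i + 1), z (i + 2), …`, and after `m` steps
returns to `z i`, which is the fixed point equation of `F i`. Conversely, the orbit of a point
of `F i` under this cyclic sequence of maps is `m`-periodic, so reading it off at the positions
`i, i + 1, …, i + m - 1` gives a cycle.
-/

open Fin.NatCast Fin.CommRing

variable {α : Type*}

def cyclicOrbit (J : Fin m → α → α) (i : Fin m) (x : α) : ℕ → α
  | 0 => x
  | k + 1 => J (i + 1 + k) (cyclicOrbit J i x k)

theorem cyclicComp_eq_cyclicOrbit (J : Fin m → α → α) (i : Fin m) (x : α) :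
    cyclicComp J i x = cyclicOrbit J i x m := by
  suffices ∀ k, (List.range k).foldl (fun y l => J (i + 1 + Fin.ofNat m l) y) x =
      cyclicOrbit J i x k from this m
  intro k
  induction k with
  | zero => rfl
  | succ k ih => simp [cyclicOrbit, ← ih, List.range_succ, Fin.ofNat_eq_cast]

theorem cyclicOrbit_periodic {J : Fin m → α → α} {i : Fin m} {x : α}
    (hx : cyclicOrbit J i x m = x) : Function.Periodic (cyclicOrbit J i x) m := by
  intro k
  induction k with
  | zero => simpa [cyclicOrbit] using hx
  | succ k ih =>
    rw [Nat.add_right_comm, cyclicOrbit, ih, Nat.cast_add, Fin.natCast_self, add_zero]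
    rfl

theorem mem_cycleSet_iff_isCycle {J : Fin m → α → α} {z : Fin m → α} :
    z ∈ cycleSet J ↔ IsCycle J z := by
  simp only [cycleSet, IsCycle, Set.mem_ofPred_eq, funext_iff, resProd, shiftR, eq_comm]

theorem add_val_sub_eq (i j : Fin m) : i + ((j - i).val : Fin m) = j := by
  rw [Fin.cast_val_eq_self, add_sub_cancel]

theorem apply_add_eq_cyclicOrbit {J : Fin m → α → α} {z : Fin m → α} (hz : z ∈ cycleSet J)
    (i : Fin m) (k : ℕ) : z (i + k) = cyclicOrbit J i (z i) k := by
  induction k with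
  | zero => simp [cyclicOrbit]
  | succ k ih =>
    have hnext : i + ((k + 1 : ℕ) : Fin m) = i + 1 + k := by push_cast; ring
    have hprev : i + 1 + (k : Fin m) - 1 = i + k := by ring
    rw [cyclicOrbit, ← ih, hnext, mem_cycleSet_iff_isCycle.1 hz (i + 1 + k), hprev]

theorem mem_cycleSet_of_apply_add_eq {J : Fin m → α → α} {z : Fin m → α} {i : Fin m} {x : α}
    (hz : ∀ k : ℕ, z (i + k) = cyclicOrbit J i x k) : z ∈ cycleSet J := by
  refine mem_cycleSet_iff_isCycle.2 fun j => ?_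
  set n := (j - 1 - i).val
  have hprev : i + (n : Fin m) = j - 1 := add_val_sub_eq i (j - 1)
  have hnext : i + 1 + (n : Fin m) = j := by linear_combination hprev
  calc z j = z (i + ((n + 1 : ℕ) : Fin m)) := by rw [← hnext]; push_cast; ring_nf
    _ = J (i + 1 + n) (z (i + n)) := by rw [hz, hz]; rfl
    _ = J j (z (j - 1)) := by rw [hnext, hprev]

theorem coordinate_projection_bijOn_cycleSet_general (J : Fin m → X → X) (i : Fin m) :
    Set.BijOn (fun z : Fin m → X => z i) (cycleSet J) (cycFix J i) ∧
    (fun z : Fin m → X => z i) '' cycleSet J = cycFix J i := by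
  have hmaps : Set.MapsTo (fun z : Fin m → X => z i) (cycleSet J) (cycFix J i) := by
    intro z hz
    change cyclicComp J i (z i) = z i
    rw [cyclicComp_eq_cyclicOrbit, ← apply_add_eq_cyclicOrbit hz, Fin.natCast_self, add_zero]
  have hinj : Set.InjOn (fun z : Fin m → X => z i) (cycleSet J) := by
    intro z hz w hw (hzw : z i = w i)
    funext j
    rw [← add_val_sub_eq i j, apply_add_eq_cyclicOrbit hz, apply_add_eq_cyclicOrbit hw, hzw]
  have hsurj : Set.SurjOn (fun z : Fin m → X => z i) (cycleSet J) (cycFix J i) := by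
    intro x (hx : cyclicComp J i x = x)
    rw [cyclicComp_eq_cyclicOrbit] at hx
    refine ⟨fun j => cyclicOrbit J i x (j - i).val,
      mem_cycleSet_of_apply_add_eq (i := i) (x := x) fun k => ?_, by simp [cyclicOrbit]⟩
    simp only [add_sub_cancel_left, Fin.val_natCast, (cyclicOrbit_periodic hx).map_mod_nat]
  have hbij : Set.BijOn (fun z : Fin m → X => z i) (cycleSet J) (cycFix J i) :=
    ⟨hmaps, hinj, hsurj⟩
  exact ⟨hbij, hbij.image_eq⟩

/-- The `i`-th coordinate projection restricted to the set of cycles is a bijection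
from `Z` onto `F_i`; in particular `Q_i (Z) = F_i`. -/
theorem coordinate_projection_bijOn_cycleSet
    (A : Fin m → X → Set X) (J : Fin m → X → X)
    (hA : ∀ i, SVMaxMonotone (A i)) (hJ : ∀ i, IsResolventOf (J i) (A i))
    (i : Fin m) :
    Set.BijOn (fun z : Fin m → X => z i) (cycleSet J) (cycFix J i) ∧
    (fun z : Fin m → X => z i) '' cycleSet J = cycFix J i :=
  coordinate_projection_bijOn_cycleSet_general J i
end
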